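/- A graph has a perfect matching cut if and only if the graph obtained from it by subdividing one edge exactly four times has a perfect matching cut. -/
import Mathlib


open SimpleGraph

/-- `G` has a perfect matching cut: a red-blue colouring using both colours in which
every vertex has exactly one neighbour of the opposite colour. -/
def HasPerfectMatchingCut {V : Type*} (G : SimpleGraph V) : Prop :=
  ∃ c : V → Bool, (∃ v, c v = true) ∧ (∃ v, c v = false) ∧
    ∀ v, {u | G.Adj v u ∧ c u ≠ c v}.ncard = 1

/-- The graph obtained from `G` by subdividing the edge `uv` exactly four times:
`uv` is replaced by a path `u, y₀, y₁, y₂, y₃, v` through four new vertices. -/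
def Subdiv4 {V : Type*} (G : SimpleGraph V) (u v : V) : SimpleGraph (V ⊕ Fin 4) :=
  SimpleGraph.fromRel (fun a b =>
    match a, b with
    | Sum.inl x, Sum.inl y => G.Adj x y ∧ ¬(x = u ∧ y = v) ∧ ¬(x = v ∧ y = u)
    | Sum.inl x, Sum.inr i => (x = u ∧ i = 0) ∨ (x = v ∧ i = 3)
    | Sum.inr i, Sum.inr j => (i : ℕ) + 1 = (j : ℕ)
    | _, _ => False)

section Helpers

lemma setOf_ncard_eq_one {α : Type*} {p : α → Prop} :
    {x | p x}.ncard = 1 ↔ ∃! x, p x := by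
  simp only [Set.ncard_eq_one, Set.eq_singleton_iff_unique_mem, Set.mem_setOf_eq, ExistsUnique]
variable {V : Type*} {G : SimpleGraph V} {u v : V}

lemma adj_ll {x y : V} : (Subdiv4 G u v).Adj (.inl x) (.inl y) ↔
    G.Adj x y ∧ ¬(x = u ∧ y = v) ∧ ¬(x = v ∧ y = u) := by
  simp only [Subdiv4, fromRel_adj]
  constructor
  · rintro ⟨hne, h | h⟩
    · exact h
    · exact ⟨h.1.symm, fun hc => h.2.2 ⟨hc.2, hc.1⟩, fun hc => h.2.1 ⟨hc.2, hc.1⟩⟩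
  · intro h
    exact ⟨by simpa using h.1.ne, Or.inl h⟩

lemma adj_lr {x : V} {i : Fin 4} : (Subdiv4 G u v).Adj (.inl x) (.inr i) ↔
    (x = u ∧ i = 0) ∨ (x = v ∧ i = 3) := by
  simp only [Subdiv4, fromRel_adj]
  constructor
  · rintro ⟨hne, h | h⟩
    · exact h
    · exact absurd h (by simp)
  · intro h
    exact ⟨by simp, Or.inl h⟩

lemma adj_rl {x : V} {i : Fin 4} : (Subdiv4 G u v).Adj (.inr i) (.inl x) ↔
    (x = u ∧ i = 0) ∨ (x = v ∧ i = 3) := by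
  rw [adj_comm]; exact adj_lr

lemma adj_rr {i j : Fin 4} : (Subdiv4 G u v).Adj (.inr i) (.inr j) ↔
    (i : ℕ) + 1 = (j : ℕ) ∨ (j : ℕ) + 1 = (i : ℕ) := by
  simp only [Subdiv4, fromRel_adj]
  constructor
  · rintro ⟨hne, h | h⟩
    · exact Or.inl h
    · exact Or.inr h
  · intro h
    refine ⟨?_, by tauto⟩
    intro hij
    have : i = j := by injection hij
    subst this
    omega

lemma nbr0 {b} (h : (Subdiv4 G u v).Adj (.inr 0) b) : b = .inl u ∨ b = .inr 1 := by
  rcases b with y | j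
  · rcases adj_rl.1 h with ⟨rfl, _⟩ | ⟨_, h3⟩
    · exact Or.inl rfl
    · exact absurd h3 (by decide)
  · have hj := adj_rr.1 h
    fin_cases j <;> first | exact Or.inr rfl | exact absurd hj (by decide)

lemma nbr1 {b} (h : (Subdiv4 G u v).Adj (.inr 1) b) : b = .inr 0 ∨ b = .inr 2 := by
  rcases b with y | j
  · rcases adj_rl.1 h with ⟨_, h3⟩ | ⟨_, h3⟩ <;> exact absurd h3 (by decide)
  · have hj := adj_rr.1 h
    fin_cases j <;>
      first | exact Or.inl rfl | exact Or.inr rfl | exact absurd hj (by decide)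

lemma nbr2 {b} (h : (Subdiv4 G u v).Adj (.inr 2) b) : b = .inr 1 ∨ b = .inr 3 := by
  rcases b with y | j
  · rcases adj_rl.1 h with ⟨_, h3⟩ | ⟨_, h3⟩ <;> exact absurd h3 (by decide)
  · have hj := adj_rr.1 h
    fin_cases j <;>
      first | exact Or.inl rfl | exact Or.inr rfl | exact absurd hj (by decide)

lemma nbr3 {b} (h : (Subdiv4 G u v).Adj (.inr 3) b) : b = .inl v ∨ b = .inr 2 := by
  rcases b with y | j
  · rcases adj_rl.1 h with ⟨_, h3⟩ | ⟨rfl, _⟩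
    · exact absurd h3 (by decide)
    · exact Or.inl rfl
  · have hj := adj_rr.1 h
    fin_cases j <;> first | exact Or.inr rfl | exact absurd hj (by decide)

lemma exu_pair {α : Type*} {x y : α} (hxy : x ≠ y) {q : α → Prop} (h : ∃! z, q z)
    (hq : ∀ z, q z → z = x ∨ z = y) : (q x ∧ ¬ q y) ∨ (¬ q x ∧ q y) := by
  obtain ⟨m, hm, hu⟩ := h
  rcases hq m hm with rfl | rfl
  · exact Or.inl ⟨hm, fun hy => hxy (hu _ hy).symm⟩
  · exact Or.inr ⟨fun hx => hxy (hu _ hx), hm⟩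

lemma pair_exu {α : Type*} {x y : α} {q : α → Prop} (hq : ∀ z, q z → z = x ∨ z = y)
    (h : (q x ∧ ¬ q y) ∨ (¬ q x ∧ q y)) : ∃! z, q z := by
  rcases h with ⟨h1, h2⟩ | ⟨h1, h2⟩
  · exact ⟨x, h1, fun z hz => (hq z hz).resolve_right (fun e => h2 (e ▸ hz))⟩
  · exact ⟨y, h2, fun z hz => (hq z hz).resolve_left (fun e => h1 (e ▸ hz))⟩

def pcol (c : V → Bool) (u v : V) : Fin 4 → Bool
  | 0 => c v
  | 1 => !c u
  | 2 => !c v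
  | 3 => c u

example (c : V → Bool) : pcol c u v 0 = c v ∧ pcol c u v 1 = !c u ∧
    pcol c u v 2 = !c v ∧ pcol c u v 3 = c u := ⟨rfl, rfl, rfl, rfl⟩

lemma fwd (huv : G.Adj u v) (h : HasPerfectMatchingCut G) :
    HasPerfectMatchingCut (Subdiv4 G u v) := by
  obtain ⟨c, ⟨a0, ha0⟩, ⟨b0, hb0⟩, hc⟩ := h
  simp only [setOf_ncard_eq_one] at hc
  have hune : u ≠ v := huv.ne
  refine ⟨Sum.elim c (pcol c u v), ⟨.inl a0, ha0⟩, ⟨.inl b0, hb0⟩, ?_⟩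
  intro x
  rw [setOf_ncard_eq_one]
  rcases x with w | i
  · by_cases hwu : u = w
    · subst hwu
      obtain ⟨m, ⟨hm1, hm2⟩, hmu⟩ := hc u
      by_cases hmv : m = v
      · obtain rfl : v = m := hmv.symm
        refine ⟨.inr 0, ⟨adj_lr.2 (Or.inl ⟨rfl, rfl⟩), by simpa [pcol] using hm2⟩, ?_⟩
        rintro (y | i) ⟨hadj, hne⟩
        · exfalso
          rw [adj_ll] at hadj
          have hy : y = v := hmu y ⟨hadj.1, by simpa using hne⟩
          exact hadj.2.1 ⟨rfl, hy⟩
        · rcases adj_lr.1 hadj with ⟨_, rfl⟩ | ⟨h1, _⟩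
          · rfl
          · exact absurd h1 hune
      · have hcvu : c v = c u := by
          by_contra hne
          exact hmv (hmu v ⟨huv, hne⟩).symm
        refine ⟨.inl m, ⟨adj_ll.2 ⟨hm1, fun h' => hmv h'.2, fun h' => hune h'.1⟩,
          by simpa using hm2⟩, ?_⟩
        rintro (y | i) ⟨hadj, hne⟩
        · rw [adj_ll] at hadj
          exact congrArg Sum.inl (hmu y ⟨hadj.1, by simpa using hne⟩)
        · exfalso
          rcases adj_lr.1 hadj with ⟨_, rfl⟩ | ⟨h1, _⟩
          · simp only [Sum.elim_inr, Sum.elim_inl] at hne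
            exact hne (by simpa [pcol] using hcvu)
          · exact hune h1
    · by_cases hwv : v = w
      · subst hwv
        obtain ⟨m, ⟨hm1, hm2⟩, hmu⟩ := hc v
        by_cases hmu' : m = u
        · obtain rfl : u = m := hmu'.symm
          refine ⟨.inr 3, ⟨adj_lr.2 (Or.inr ⟨rfl, rfl⟩), by simpa [pcol] using hm2⟩, ?_⟩
          rintro (y | i) ⟨hadj, hne⟩
          · exfalso
            rw [adj_ll] at hadj
            have hy : y = u := hmu y ⟨hadj.1, by simpa using hne⟩
            exact hadj.2.2 ⟨rfl, hy⟩
          · rcases adj_lr.1 hadj with ⟨h1, _⟩ | ⟨_, rfl⟩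
            · exact absurd h1 (Ne.symm hune)
            · rfl
        · have hcuv : c u = c v := by
            by_contra hne
            exact hmu' (hmu u ⟨huv.symm, hne⟩).symm
          refine ⟨.inl m, ⟨adj_ll.2 ⟨hm1, fun h' => hune h'.1.symm, fun h' => hmu' h'.2⟩,
            by simpa using hm2⟩, ?_⟩
          rintro (y | i) ⟨hadj, hne⟩
          · rw [adj_ll] at hadj
            exact congrArg Sum.inl (hmu y ⟨hadj.1, by simpa using hne⟩)
          · exfalso
            rcases adj_lr.1 hadj with ⟨h1, _⟩ | ⟨_, rfl⟩
            · exact hune h1.symm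
            · simp only [Sum.elim_inr, Sum.elim_inl] at hne
              exact hne (by simpa [pcol] using hcuv)
      · obtain ⟨m, ⟨hm1, hm2⟩, hmu⟩ := hc w
        refine ⟨.inl m, ⟨adj_ll.2 ⟨hm1, fun h' => hwu h'.1.symm, fun h' => hwv h'.1.symm⟩,
          by simpa using hm2⟩, ?_⟩
        rintro (y | i) ⟨hadj, hne⟩
        · exact congrArg Sum.inl (hmu y ⟨(adj_ll.1 hadj).1, by simpa using hne⟩)
        · exfalso
          rcases adj_lr.1 hadj with ⟨h1, _⟩ | ⟨h1, _⟩
          · exact hwu h1.symm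
          · exact hwv h1.symm
  · have h4 : i = 0 ∨ i = 1 ∨ i = 2 ∨ i = 3 := by fin_cases i <;> simp
    rcases h4 with rfl | rfl | rfl | rfl
    · refine pair_exu (x := Sum.inl u) (y := Sum.inr 1) (fun z hz => nbr0 hz.1) ?_
      have hxadj : (Subdiv4 G u v).Adj (.inr 0) (.inl u) := adj_rl.2 (Or.inl ⟨rfl, rfl⟩)
      have hyadj : (Subdiv4 G u v).Adj (.inr 0) (.inr 1) := adj_rr.2 (by decide)
      simp only [hxadj, hyadj, true_and, Sum.elim_inl, Sum.elim_inr]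
      show (c u ≠ c v ∧ ¬((!c u) ≠ c v)) ∨ (¬(c u ≠ c v) ∧ (!c u) ≠ c v)
      cases hcu : c u <;> cases hcv : c v <;> simp
    · refine pair_exu (x := Sum.inr 0) (y := Sum.inr 2) (fun z hz => nbr1 hz.1) ?_
      have hxadj : (Subdiv4 G u v).Adj (.inr 1) (.inr 0) := adj_rr.2 (by decide)
      have hyadj : (Subdiv4 G u v).Adj (.inr 1) (.inr 2) := adj_rr.2 (by decide)
      simp only [hxadj, hyadj, true_and, Sum.elim_inr]
      show (c v ≠ (!c u) ∧ ¬((!c v) ≠ (!c u))) ∨ (¬(c v ≠ (!c u)) ∧ (!c v) ≠ (!c u))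
      cases hcu : c u <;> cases hcv : c v <;> simp
    · refine pair_exu (x := Sum.inr 1) (y := Sum.inr 3) (fun z hz => nbr2 hz.1) ?_
      have hxadj : (Subdiv4 G u v).Adj (.inr 2) (.inr 1) := adj_rr.2 (by decide)
      have hyadj : (Subdiv4 G u v).Adj (.inr 2) (.inr 3) := adj_rr.2 (by decide)
      simp only [hxadj, hyadj, true_and, Sum.elim_inr]
      show ((!c u) ≠ (!c v) ∧ ¬(c u ≠ (!c v))) ∨ (¬((!c u) ≠ (!c v)) ∧ c u ≠ (!c v))
      cases hcu : c u <;> cases hcv : c v <;> simp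
    · refine pair_exu (x := Sum.inl v) (y := Sum.inr 2) (fun z hz => nbr3 hz.1) ?_
      have hxadj : (Subdiv4 G u v).Adj (.inr 3) (.inl v) := adj_rl.2 (Or.inr ⟨rfl, rfl⟩)
      have hyadj : (Subdiv4 G u v).Adj (.inr 3) (.inr 2) := adj_rr.2 (by decide)
      simp only [hxadj, hyadj, true_and, Sum.elim_inl, Sum.elim_inr]
      show (c v ≠ c u ∧ ¬((!c v) ≠ c u)) ∨ (¬(c v ≠ c u) ∧ (!c v) ≠ c u)
      cases hcu : c u <;> cases hcv : c v <;> simp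

lemma bwd (huv : G.Adj u v) (h : HasPerfectMatchingCut (Subdiv4 G u v)) :
    HasPerfectMatchingCut G := by
  obtain ⟨c', -, -, hc'⟩ := h
  simp only [setOf_ncard_eq_one] at hc'
  have hune : u ≠ v := huv.ne
  have hA0u : (Subdiv4 G u v).Adj (.inr 0) (.inl u) := adj_rl.2 (Or.inl ⟨rfl, rfl⟩)
  have hA01 : (Subdiv4 G u v).Adj (.inr 0) (.inr 1) := adj_rr.2 (by decide)
  have hA10 : (Subdiv4 G u v).Adj (.inr 1) (.inr 0) := adj_rr.2 (by decide)
  have hA12 : (Subdiv4 G u v).Adj (.inr 1) (.inr 2) := adj_rr.2 (by decide)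
  have hA21 : (Subdiv4 G u v).Adj (.inr 2) (.inr 1) := adj_rr.2 (by decide)
  have hA23 : (Subdiv4 G u v).Adj (.inr 2) (.inr 3) := adj_rr.2 (by decide)
  have hA3v : (Subdiv4 G u v).Adj (.inr 3) (.inl v) := adj_rl.2 (Or.inr ⟨rfl, rfl⟩)
  have hA32 : (Subdiv4 G u v).Adj (.inr 3) (.inr 2) := adj_rr.2 (by decide)
  have X0 := exu_pair (x := (Sum.inl u : V ⊕ Fin 4)) (y := Sum.inr 1) (by simp)
    (hc' (.inr 0)) (fun z hz => nbr0 hz.1)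
  have X1 := exu_pair (x := (Sum.inr 0 : V ⊕ Fin 4)) (y := Sum.inr 2) (by simp)
    (hc' (.inr 1)) (fun z hz => nbr1 hz.1)
  have X2 := exu_pair (x := (Sum.inr 1 : V ⊕ Fin 4)) (y := Sum.inr 3) (by simp)
    (hc' (.inr 2)) (fun z hz => nbr2 hz.1)
  have X3 := exu_pair (x := (Sum.inl v : V ⊕ Fin 4)) (y := Sum.inr 2) (by simp)
    (hc' (.inr 3)) (fun z hz => nbr3 hz.1)
  simp only [hA0u, hA01, hA10, hA12, hA21, hA23, hA3v, hA32, true_and] at X0 X1 X2 X3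
  have K : ((c' (Sum.inr 0) ≠ c' (Sum.inl u)) ↔ (c' (Sum.inl v) ≠ c' (Sum.inl u))) ∧
      ((c' (Sum.inr 3) ≠ c' (Sum.inl v)) ↔ (c' (Sum.inl u) ≠ c' (Sum.inl v))) := by
    revert X0 X1 X2 X3
    generalize c' (Sum.inl u) = A
    generalize c' (Sum.inl v) = B
    generalize c' (Sum.inr 0) = P0
    generalize c' (Sum.inr 1) = P1
    generalize c' (Sum.inr 2) = P2
    generalize c' (Sum.inr 3) = P3
    cases A <;> cases B <;> cases P0 <;> cases P1 <;> cases P2 <;> cases P3 <;> decide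
  refine ⟨fun w => c' (.inl w), ?_, ?_, ?_⟩
  · obtain ⟨m, ⟨hmadj, hmne⟩, hmu⟩ := hc' (.inl u)
    by_cases hcu : c' (.inl u) = true
    · exact ⟨u, hcu⟩
    · have hu : c' (.inl u) = false := by simpa using hcu
      rcases m with y | i
      · refine ⟨y, ?_⟩
        rw [hu] at hmne
        simpa using hmne
      · have hi : i = 0 := by
          rcases adj_lr.1 hmadj with ⟨_, rfl⟩ | ⟨h1, _⟩
          · rfl
          · exact absurd h1 hune
        subst hi
        have hb : c' (.inl v) ≠ c' (.inl u) := K.1.mp hmne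
        refine ⟨v, ?_⟩
        rw [hu] at hb
        simpa using hb
  · obtain ⟨m, ⟨hmadj, hmne⟩, hmu⟩ := hc' (.inl u)
    by_cases hcu : c' (.inl u) = false
    · exact ⟨u, hcu⟩
    · have hu : c' (.inl u) = true := by simpa using hcu
      rcases m with y | i
      · refine ⟨y, ?_⟩
        rw [hu] at hmne
        simpa using hmne
      · have hi : i = 0 := by
          rcases adj_lr.1 hmadj with ⟨_, rfl⟩ | ⟨h1, _⟩
          · rfl
          · exact absurd h1 hune
        subst hi
        have hb : c' (.inl v) ≠ c' (.inl u) := K.1.mp hmne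
        refine ⟨v, ?_⟩
        rw [hu] at hb
        simpa using hb
  · intro w
    rw [setOf_ncard_eq_one]
    by_cases hwu : u = w
    · subst hwu
      obtain ⟨m, ⟨hmadj, hmne⟩, hmu⟩ := hc' (.inl u)
      rcases m with y | i
      · rw [adj_ll] at hmadj
        refine ⟨y, ⟨hmadj.1, hmne⟩, ?_⟩
        rintro y' ⟨hadj', hne'⟩
        by_cases hy'v : y' = v
        · subst hy'v
          exfalso
          have h0 : c' (.inr 0) ≠ c' (.inl u) := K.1.mpr hne'
          exact absurd (hmu (.inr 0) ⟨hA0u.symm, h0⟩) (by simp)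
        · exact Sum.inl.inj (hmu (.inl y')
            ⟨adj_ll.2 ⟨hadj', fun h => hy'v h.2, fun h => hune h.1⟩, hne'⟩)
      · have hi : i = 0 := by
          rcases adj_lr.1 hmadj with ⟨_, rfl⟩ | ⟨h1, _⟩
          · rfl
          · exact absurd h1 hune
        subst hi
        refine ⟨v, ⟨huv, K.1.mp hmne⟩, ?_⟩
        rintro y' ⟨hadj', hne'⟩
        by_cases hy'v : y' = v
        · exact hy'v
        · exact absurd (hmu (.inl y')
            ⟨adj_ll.2 ⟨hadj', fun h => hy'v h.2, fun h => hune h.1⟩, hne'⟩) (by simp)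
    · by_cases hwv : v = w
      · subst hwv
        obtain ⟨m, ⟨hmadj, hmne⟩, hmu⟩ := hc' (.inl v)
        rcases m with y | i
        · rw [adj_ll] at hmadj
          refine ⟨y, ⟨hmadj.1, hmne⟩, ?_⟩
          rintro y' ⟨hadj', hne'⟩
          by_cases hy'u : y' = u
          · subst hy'u
            exfalso
            have h3 : c' (.inr 3) ≠ c' (.inl v) := K.2.mpr hne'
            exact absurd (hmu (.inr 3) ⟨hA3v.symm, h3⟩) (by simp)
          · exact Sum.inl.inj (hmu (.inl y')
              ⟨adj_ll.2 ⟨hadj', fun h => hune h.1.symm, fun h => hy'u h.2⟩, hne'⟩)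
        · have hi : i = 3 := by
            rcases adj_lr.1 hmadj with ⟨h1, _⟩ | ⟨_, rfl⟩
            · exact absurd h1.symm hune
            · rfl
          subst hi
          refine ⟨u, ⟨huv.symm, K.2.mp hmne⟩, ?_⟩
          rintro y' ⟨hadj', hne'⟩
          by_cases hy'u : y' = u
          · exact hy'u
          · exact absurd (hmu (.inl y')
              ⟨adj_ll.2 ⟨hadj', fun h => hune h.1.symm, fun h => hy'u h.2⟩, hne'⟩) (by simp)
      · obtain ⟨m, ⟨hmadj, hmne⟩, hmu⟩ := hc' (.inl w)
        rcases m with y | i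
        · rw [adj_ll] at hmadj
          refine ⟨y, ⟨hmadj.1, hmne⟩, ?_⟩
          rintro y' ⟨hadj', hne'⟩
          exact Sum.inl.inj (hmu (.inl y')
            ⟨adj_ll.2 ⟨hadj', fun h => hwu h.1.symm, fun h => hwv h.1.symm⟩, hne'⟩)
        · exfalso
          rcases adj_lr.1 hmadj with ⟨h1, _⟩ | ⟨h1, _⟩
          · exact hwu h1.symm
          · exact hwv h1.symm

end Helpers

theorem stmt9 {V : Type*} [Fintype V] (G : SimpleGraph V) (u v : V)
    (huv : G.Adj u v) :
    HasPerfectMatchingCut G ↔ HasPerfectMatchingCut (Subdiv4 G u v) :=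
  ⟨fwd huv, bwd huv⟩
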